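/- Under the hypotheses of the preceding descent lemma, if additionally σ^β ≥ (2L + B̄)/(1-α) + (2 n^{(1-β)/2} M + 2M)/((β+1)(1-α)) · ε^{β-1} for some α ∈ (0,1), then F(x̄) ≤ F(x) - (α/2)σ‖x̄ - x‖² and consequently F(x̄) ≤ F(x) - α ε²/(2σ). -/

import Mathlib

/-!
Write `d = x̄ - x`, `r = ‖d‖` and `t = ε / σ ≤ r`. The Hölder descent bound, Cauchy–Schwarz and
the subproblem inequality give
`F x̄ ≤ F x + ‖∇f x - g‖ r + (L + B̄ - σ) / 2 · r² + M / (β + 1) · r ^ (β + 1)`.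
Because `β ≤ 1` and `t ≤ r`, both the Hölder term and the `λ ^ β` part of the gradient error are
at most a multiple of `t ^ (β - 1) r²`, so `F x̄ - F x ≤ (C - σ / 2) r²` with
`C = L + B̄ / 2 + (n ^ ((1 - β) / 2) + 1) M / (β + 1) · t ^ (β - 1)`. Finally
`t ^ (β - 1) = ε ^ (β - 1) σ ^ (1 - β)`, so multiplying the lower bound on `σ ^ β` by
`σ ^ (1 - β) ≥ 1` yields `C ≤ (1 - α) σ / 2`.
-/

open RealInnerProductSpace

theorem rpow_add_one_le_rpow_sub_one_mul_sq {β t r : ℝ} (hβ : β ≤ 1) (ht : 0 < t) (htr : t ≤ r) :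
    r ^ (β + 1) ≤ t ^ (β - 1) * r ^ 2 := by
  have hr : 0 < r := ht.trans_le htr
  calc r ^ (β + 1) = r ^ (β - 1) * r ^ 2 := by
        rw [← Real.rpow_natCast, ← Real.rpow_add hr]; norm_num; ring_nf
    _ ≤ t ^ (β - 1) * r ^ 2 :=
        mul_le_mul_of_nonneg_right (Real.rpow_le_rpow_of_nonpos ht htr (by linarith)) (sq_nonneg r)

theorem rpow_mul_le_rpow_sub_one_mul_sq {β t r : ℝ} (ht : 0 < t) (htr : t ≤ r) :
    t ^ β * r ≤ t ^ (β - 1) * r ^ 2 := by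
  calc t ^ β * r = t ^ (β - 1) * t * r := by rw [← Real.rpow_add_one ht.ne']; ring_nf
    _ ≤ t ^ (β - 1) * r * r := by gcongr; exact ht.le.trans htr
    _ = t ^ (β - 1) * r ^ 2 := by ring

theorem mul_rpow_le_rpow_one_sub_mul_rpow {β s lam t : ℝ} (hβ : 0 ≤ β) (hs : 0 < s) (hlam : 0 ≤ lam)
    (hlamt : lam * s ≤ t) : s * lam ^ β ≤ s ^ (1 - β) * t ^ β := by
  calc s * lam ^ β = s ^ (1 - β) * (lam * s) ^ β := by
        rw [Real.mul_rpow hlam hs.le, mul_left_comm, ← Real.rpow_add hs]; norm_num; ring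
    _ ≤ s ^ (1 - β) * t ^ β := by gcongr

theorem gradient_error_mul_le {β L m s lam t r e : ℝ} (hβ : 0 ≤ β) (hL : 0 ≤ L) (hm : 0 ≤ m)
    (hs : 0 < s) (hlam : 0 ≤ lam) (ht : 0 < t) (hlamt : lam * s ≤ t) (htr : t ≤ r)
    (he : e ≤ lam * s * L / 2 + s * m * lam ^ β) :
    e * r ≤ (L / 2 + s ^ (1 - β) * m * t ^ (β - 1)) * r ^ 2 := by
  have hr : 0 ≤ r := ht.le.trans htr
  have hlin : lam * s * L / 2 * r ≤ L / 2 * r ^ 2 := by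
    have := mul_le_mul_of_nonneg_left (hlamt.trans htr) hL
    nlinarith
  have hhol : s * lam ^ β * r ≤ s ^ (1 - β) * (t ^ (β - 1) * r ^ 2) :=
    calc s * lam ^ β * r ≤ s ^ (1 - β) * t ^ β * r :=
          mul_le_mul_of_nonneg_right (mul_rpow_le_rpow_one_sub_mul_rpow hβ hs hlam hlamt) hr
      _ = s ^ (1 - β) * (t ^ β * r) := by ring
      _ ≤ s ^ (1 - β) * (t ^ (β - 1) * r ^ 2) :=
          mul_le_mul_of_nonneg_left (rpow_mul_le_rpow_sub_one_mul_sq ht htr) (by positivity)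
  calc e * r ≤ (lam * s * L / 2 + s * m * lam ^ β) * r := by gcongr
    _ = lam * s * L / 2 * r + m * (s * lam ^ β * r) := by ring
    _ ≤ L / 2 * r ^ 2 + m * (s ^ (1 - β) * (t ^ (β - 1) * r ^ 2)) := by gcongr
    _ = (L / 2 + s ^ (1 - β) * m * t ^ (β - 1)) * r ^ 2 := by ring

theorem neg_inner_apply_self_le {E : Type*} [NormedAddCommGroup E] [InnerProductSpace ℝ E]
    (B : E →L[ℝ] E) (d : E) : -⟪B d, d⟫ ≤ ‖B‖ * ‖d‖ ^ 2 :=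
  calc -⟪B d, d⟫ ≤ ‖B d‖ * ‖d‖ := (neg_le_abs _).trans (abs_real_inner_le_norm _ _)
    _ ≤ ‖B‖ * ‖d‖ * ‖d‖ := by gcongr; exact B.le_opNorm d
    _ = ‖B‖ * ‖d‖ ^ 2 := by ring

theorem add_le_of_proximal_step {E : Type*} [NormedAddCommGroup E] [InnerProductSpace ℝ E]
    {f h : E → ℝ} {x xbar v g : E} {B : E →L[ℝ] E} {Bbar σ R : ℝ} (hB : ‖B‖ ≤ Bbar)
    (hf : f xbar ≤ f x + ⟪v, xbar - x⟫ + R)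
    (hsub : ⟪g, xbar - x⟫ + (1 / 2 : ℝ) * ⟪B (xbar - x), xbar - x⟫
      + (σ / 2) * ‖xbar - x‖ ^ 2 + h xbar ≤ h x) :
    f xbar + h xbar ≤
      f x + h x + ‖v - g‖ * ‖xbar - x‖ + R + (Bbar - σ) / 2 * ‖xbar - x‖ ^ 2 := by
  have hv : ⟪v, xbar - x⟫ ≤ ⟪g, xbar - x⟫ + ‖v - g‖ * ‖xbar - x‖ := by
    have := real_inner_le_norm (v - g) (xbar - x)
    rw [inner_sub_left] at this
    linarith
  have hBd : -⟪B (xbar - x), xbar - x⟫ ≤ Bbar * ‖xbar - x‖ ^ 2 :=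
    (neg_inner_apply_self_le B _).trans (by gcongr)
  linarith

theorem descent_constant_le {L M N β Bbar ε σ α : ℝ} (hLB : 0 ≤ 2 * L + Bbar)
    (hβ : β ∈ Set.Ioc (0 : ℝ) 1) (hε : 0 < ε) (hσ : 1 ≤ σ) (hα : α < 1)
    (hσbig : (2 * L + Bbar) / (1 - α)
      + (2 * N * M + 2 * M) / ((β + 1) * (1 - α)) * ε ^ (β - 1) ≤ σ ^ β) :
    L + Bbar / 2 + (N + 1) * (M / (β + 1)) * (ε / σ) ^ (β - 1) ≤ (1 - α) / 2 * σ := by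
  obtain ⟨hβ0, hβ1⟩ := hβ
  have hσ0 : 0 < σ := by linarith
  have hα' : 0 < 1 - α := by linarith
  have hσβ : 1 ≤ σ ^ (1 - β) := Real.one_le_rpow hσ (by linarith)
  have hquot : (ε / σ) ^ (β - 1) = ε ^ (β - 1) * σ ^ (1 - β) := by
    rw [Real.div_rpow hε.le hσ0.le, div_eq_mul_inv, ← Real.rpow_neg hσ0.le, neg_sub]
  have hscaled :=
    mul_le_mul_of_nonneg_right hσbig (by positivity : 0 ≤ (1 - α) / 2 * σ ^ (1 - β))
  have hlhs : ((2 * L + Bbar) / (1 - α)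
      + (2 * N * M + 2 * M) / ((β + 1) * (1 - α)) * ε ^ (β - 1)) * ((1 - α) / 2 * σ ^ (1 - β))
      = (L + Bbar / 2) * σ ^ (1 - β) + (N + 1) * (M / (β + 1)) * (ε / σ) ^ (β - 1) := by
    rw [hquot]; field_simp
  have hrhs : σ ^ β * ((1 - α) / 2 * σ ^ (1 - β)) = (1 - α) / 2 * σ := by
    rw [mul_left_comm, ← Real.rpow_add hσ0]; norm_num
  have hLBσ : L + Bbar / 2 ≤ (L + Bbar / 2) * σ ^ (1 - β) :=
    le_mul_of_one_le_right (by linarith) hσβ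
  linarith

theorem sufficient_decrease_sigma_large_general {n : ℕ}
    (f h : EuclideanSpace ℝ (Fin n) → ℝ)
    (f' : EuclideanSpace ℝ (Fin n) → EuclideanSpace ℝ (Fin n))
    (L M β Bbar ε σ lam α : ℝ)
    (hL : 0 < L) (hM : 0 < M) (hβ : β ∈ Set.Ioc (0 : ℝ) 1)
    (hε : ε ∈ Set.Ioo (0 : ℝ) 1) (hσ : 1 ≤ σ) (hα : α ∈ Set.Ioo (0 : ℝ) 1)
    (hdesc : ∀ x y, f y ≤ f x + ⟪f' x, y - x⟫ + (L / 2) * ‖y - x‖ ^ 2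
      + (M / (β + 1)) * ‖y - x‖ ^ (β + 1))
    (x xbar : EuclideanSpace ℝ (Fin n)) (g : EuclideanSpace ℝ (Fin n))
    (B : EuclideanSpace ℝ (Fin n) →L[ℝ] EuclideanSpace ℝ (Fin n))
    (hBnorm : ‖B‖ ≤ Bbar)
    (hlam : 0 < lam) (hlamle : lam ≤ ε / (σ * Real.sqrt n))
    (hgerr : ‖f' x - g‖ ≤ lam * Real.sqrt n * L / 2 + Real.sqrt n * (M / (β + 1)) * lam ^ β)
    (hsub : ⟪g, xbar - x⟫ + (1 / 2 : ℝ) * ⟪B (xbar - x), xbar - x⟫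
      + (σ / 2) * ‖xbar - x‖ ^ 2 + h xbar ≤ h x)
    (hstep : ε ≤ σ * ‖xbar - x‖)
    (hσbig : (2 * L + Bbar) / (1 - α)
      + (2 * (n : ℝ) ^ ((1 - β) / 2) * M + 2 * M) / ((β + 1) * (1 - α)) * ε ^ (β - 1)
        ≤ σ ^ β) :
    f xbar + h xbar ≤ f x + h x - (α / 2) * σ * ‖xbar - x‖ ^ 2 ∧
    f xbar + h xbar ≤ f x + h x - α * ε ^ 2 / (2 * σ) := by
  obtain ⟨hε0, -⟩ := hε
  obtain ⟨hα0, hα1⟩ := hα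
  have hσ0 : 0 < σ := by linarith
  have hn : 0 < Real.sqrt n := by
    refine (Real.sqrt_nonneg _).lt_of_ne fun h0 => ?_
    rw [← h0, mul_zero, div_zero] at hlamle
    linarith
  have hsqrt : Real.sqrt n ^ (1 - β) = (n : ℝ) ^ ((1 - β) / 2) := by
    rw [Real.sqrt_eq_rpow, ← Real.rpow_mul n.cast_nonneg]; ring_nf
  have hm : 0 ≤ M / (β + 1) := div_nonneg hM.le (by linarith [hβ.1])
  set r := ‖xbar - x‖
  have htr : ε / σ ≤ r := (div_le_iff₀' hσ0).2 hstep
  have hlamt : lam * Real.sqrt n ≤ ε / σ := by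
    rw [div_mul_eq_div_div] at hlamle
    exact (le_div_iff₀ hn).1 hlamle
  have hmodel := add_le_of_proximal_step hBnorm ((hdesc x xbar).trans_eq (add_assoc _ _ _)) hsub
  have hgrad := gradient_error_mul_le hβ.1.le hL.le hm hn hlam.le (by positivity)
    hlamt htr hgerr
  have hhold := mul_le_mul_of_nonneg_left
    (rpow_add_one_le_rpow_sub_one_mul_sq hβ.2 (by positivity) htr) hm
  have hconst := mul_le_mul_of_nonneg_right
    (descent_constant_le (by linarith [norm_nonneg B]) hβ hε0 hσ hα1 hσbig) (sq_nonneg r)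
  rw [hsqrt] at hgrad
  have hdecrease : f xbar + h xbar ≤ f x + h x - (α / 2) * σ * r ^ 2 := by linarith
  refine ⟨hdecrease, hdecrease.trans ?_⟩
  have hsq : ε ^ 2 ≤ (σ * r) ^ 2 := pow_le_pow_left₀ hε0.le hstep 2
  rw [sub_le_sub_iff_left, div_le_iff₀ (by positivity)]
  nlinarith

/-- Well-definedness theorem: if in addition `σ^β` dominates the constant
`(2L + B̄)/(1-α) + (2 n^{(1-β)/2} M + 2M)/((β+1)(1-α)) ε^{β-1}`, then the
sufficient decrease `F(x̄) ≤ F(x) - (α/2)σ‖x̄-x‖²` holds, and consequently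
`F(x̄) ≤ F(x) - αε²/(2σ)`. -/
theorem sufficient_decrease_sigma_large {n : ℕ}
    (f h : EuclideanSpace ℝ (Fin n) → ℝ)
    (f' : EuclideanSpace ℝ (Fin n) → EuclideanSpace ℝ (Fin n))
    (L M β Bbar ε σ lam α : ℝ)
    (hL : 0 < L) (hM : 0 < M) (hβ : β ∈ Set.Ioc (0 : ℝ) 1) (hBbar : 0 ≤ Bbar)
    (hε : ε ∈ Set.Ioo (0 : ℝ) 1) (hσ : 1 ≤ σ) (hα : α ∈ Set.Ioo (0 : ℝ) 1)
    (hdesc : ∀ x y, f y ≤ f x + ⟪f' x, y - x⟫ + (L / 2) * ‖y - x‖ ^ 2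
      + (M / (β + 1)) * ‖y - x‖ ^ (β + 1))
    (x xbar : EuclideanSpace ℝ (Fin n)) (g : EuclideanSpace ℝ (Fin n))
    (B : EuclideanSpace ℝ (Fin n) →L[ℝ] EuclideanSpace ℝ (Fin n))
    (hBnorm : ‖B‖ ≤ Bbar)
    (hlam : 0 < lam) (hlamle : lam ≤ ε / (σ * Real.sqrt n))
    (hgerr : ‖f' x - g‖ ≤ lam * Real.sqrt n * L / 2 + Real.sqrt n * (M / (β + 1)) * lam ^ β)
    (hsub : ⟪g, xbar - x⟫ + (1 / 2 : ℝ) * ⟪B (xbar - x), xbar - x⟫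
      + (σ / 2) * ‖xbar - x‖ ^ 2 + h xbar ≤ h x)
    (hstep : ε ≤ σ * ‖xbar - x‖)
    (hσbig : (2 * L + Bbar) / (1 - α)
      + (2 * (n : ℝ) ^ ((1 - β) / 2) * M + 2 * M) / ((β + 1) * (1 - α)) * ε ^ (β - 1)
        ≤ σ ^ β) :
    f xbar + h xbar ≤ f x + h x - (α / 2) * σ * ‖xbar - x‖ ^ 2 ∧
    f xbar + h xbar ≤ f x + h x - α * ε ^ 2 / (2 * σ) :=
  sufficient_decrease_sigma_large_general f h f' L M β Bbar ε σ lam α hL hM hβ hε hσ hα hdesc x xbar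
    g B hBnorm hlam hlamle hgerr hsub hstep hσbig
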